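/- The image of the map A ↦ A·conj(A) from SL(2,ℂ) to SL(2,ℂ) is exactly {B ∈ SL(2,ℂ) : tr(B) ∈ ℝ, tr(B) > −2} ∪ {−Id}. -/

import Mathlib

open Matrix Complex
set_option maxHeartbeats 1000000
set_option linter.unnecessarySeqFocus false

private lemma map_fin_two (f : ℂ →+* ℂ) (a b c d : ℂ) :
    (!![a, b; c, d]).map f = !![f a, f b; f c, f d] := by
  ext i j
  fin_cases i <;> fin_cases j <;> simp [Matrix.map_apply]

private lemma key (B : Matrix (Fin 2) (Fin 2) ℂ) (hB : B.det = 1)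
    (him : B.trace.im = 0) (hre : -2 < B.trace.re) (hb : B 0 1 ≠ 0) :
    ∃ A : Matrix (Fin 2) (Fin 2) ℂ, A.det = 1 ∧ A * A.map (starRingEnd ℂ) = B := by
  obtain ⟨a, b, c, d, rfl⟩ : ∃ a b c d, B = !![a, b; c, d] := ⟨_, _, _, _, B.eta_fin_two⟩
  rw [Matrix.det_fin_two_of] at hB
  rw [Matrix.trace_fin_two_of] at him hre
  have hbne : b ≠ 0 := by simpa using hb
  have hcast : ((a + d).re : ℂ) = a + d :=
    Complex.conj_eq_iff_re.1 (Complex.conj_eq_iff_im.2 him)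
  have ht : (starRingEnd ℂ) a + (starRingEnd ℂ) d = a + d := by
    have h := Complex.conj_eq_iff_im.2 him
    simpa [map_add] using h
  set k : ℝ := ‖b‖ * Real.sqrt ((a + d).re + 2) with hkdef
  have hkpos : 0 < k :=
    mul_pos (norm_pos_iff.mpr hbne) (Real.sqrt_pos.2 (by linarith))
  have hkC : (k : ℂ) ≠ 0 := Complex.ofReal_ne_zero.2 hkpos.ne'
  have hk : (k : ℂ) ^ 2 = b * (starRingEnd ℂ) b * (a + d + 2) := by
    have h1 : (‖b‖ : ℝ) ^ 2 = Complex.normSq b := Complex.sq_norm b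
    have h2 : Real.sqrt ((a + d).re + 2) ^ 2 = (a + d).re + 2 :=
      Real.sq_sqrt (by linarith)
    calc ((k : ℝ) : ℂ) ^ 2
        = (((‖b‖ ^ 2 * Real.sqrt ((a + d).re + 2) ^ 2 : ℝ)) : ℂ) := by
          rw [hkdef]; push_cast; ring
      _ = ((Complex.normSq b * ((a + d).re + 2) : ℝ) : ℂ) := by rw [h1, h2]
      _ = b * (starRingEnd ℂ) b * (a + d + 2) := by
          rw [Complex.ofReal_mul, ← Complex.mul_conj]
          push_cast
          rw [hcast]
  set M : Matrix (Fin 2) (Fin 2) ℂ :=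
    !![-(b * (a + d + 1 - (starRingEnd ℂ) d)), -(b * (starRingEnd ℂ) b);
       -(d * (a + d + 1) - 1 - (starRingEnd ℂ) d * (1 + d)), -((starRingEnd ℂ) b * (1 + d))]
    with hMdef
  have hMdet : M.det = (k : ℂ) ^ 2 := by
    rw [hMdef, Matrix.det_fin_two_of]
    linear_combination -hk
  have hmap : M.map (starRingEnd ℂ) =
      !![-((starRingEnd ℂ) b * ((starRingEnd ℂ) a + (starRingEnd ℂ) d + 1 - d)),
         -((starRingEnd ℂ) b * b);
         -((starRingEnd ℂ) d * ((starRingEnd ℂ) a + (starRingEnd ℂ) d + 1) - 1 - d * (1 + (starRingEnd ℂ) d)),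
         -(b * (1 + (starRingEnd ℂ) d))] := by
    rw [hMdef, map_fin_two]
    congr 1 <;> simp [_root_.map_mul, _root_.map_add, _root_.map_sub, _root_.map_one]
  have hMQ : M * M.map (starRingEnd ℂ) = ((k : ℂ) ^ 2) • !![a, b; c, d] := by
    rw [hmap, hMdef]
    ext i j
    fin_cases i <;> fin_cases j <;>
      simp [Matrix.mul_apply, Fin.sum_univ_two, Matrix.smul_apply, smul_eq_mul]
    · linear_combination (-a) * hk + (b * (starRingEnd ℂ) b * (a + d + 1)) * ht
    · linear_combination (-b) * hk
    · linear_combination (-c) * hk + ((starRingEnd ℂ) b * (a*d + d^2 + d - 1)) * ht +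
        ((starRingEnd ℂ) b * (a + d + 2)) * hB
    · linear_combination (-d) * hk
  refine ⟨((k : ℂ)⁻¹) • M, ?_, ?_⟩
  · rw [Matrix.det_smul, hMdet]
    simp [Fintype.card_fin]
    field_simp
  · have hsm : (((k : ℂ)⁻¹) • M).map (starRingEnd ℂ) = ((k : ℂ)⁻¹) • M.map (starRingEnd ℂ) := by
      ext i j
      simp [Matrix.map_apply, Matrix.smul_apply, smul_eq_mul, _root_.map_mul, map_inv₀,
        Complex.conj_ofReal]
    rw [hsm, Matrix.smul_mul, Matrix.mul_smul, hMQ, smul_smul, smul_smul]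
    have : (k : ℂ)⁻¹ * (k : ℂ)⁻¹ * (k : ℂ) ^ 2 = 1 := by field_simp
    rw [this, one_smul]

private lemma fwd (A : Matrix (Fin 2) (Fin 2) ℂ) (hA1 : A.det = 1) :
    ((A * A.map (starRingEnd ℂ)).trace.im = 0 ∧
      -2 < (A * A.map (starRingEnd ℂ)).trace.re) ∨ A * A.map (starRingEnd ℂ) = -1 := by
  obtain ⟨a, b, c, d, rfl⟩ : ∃ a b c d, A = !![a, b; c, d] := ⟨_, _, _, _, A.eta_fin_two⟩
  rw [Matrix.det_fin_two_of] at hA1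
  rw [map_fin_two]
  have htr : (!![a, b; c, d] * !![(starRingEnd ℂ) a, (starRingEnd ℂ) b;
      (starRingEnd ℂ) c, (starRingEnd ℂ) d]).trace
      = a * (starRingEnd ℂ) a + b * (starRingEnd ℂ) c
        + (c * (starRingEnd ℂ) b + d * (starRingEnd ℂ) d) := by
    rw [Matrix.mul_fin_two, Matrix.trace_fin_two_of]
  have him : (!![a, b; c, d] * !![(starRingEnd ℂ) a, (starRingEnd ℂ) b;
      (starRingEnd ℂ) c, (starRingEnd ℂ) d]).trace.im = 0 := by
    rw [htr]
    simp [Complex.add_im, Complex.mul_im, Complex.conj_re, Complex.conj_im]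
    ring
  have e1 : b.re*c.re - b.im*c.im = a.re*d.re - a.im*d.im - 1 := by
    have h := congrArg Complex.re hA1
    simp [Complex.sub_re, Complex.mul_re, Complex.one_re] at h
    linarith
  have e2 : b.re*c.im + b.im*c.re = a.re*d.im + a.im*d.re := by
    have h := congrArg Complex.im hA1
    simp [Complex.sub_im, Complex.mul_im, Complex.one_im] at h
    linarith
  have hre_expr : (!![a, b; c, d] * !![(starRingEnd ℂ) a, (starRingEnd ℂ) b;
      (starRingEnd ℂ) c, (starRingEnd ℂ) d]).trace.re
      = a.re^2+a.im^2+d.re^2+d.im^2 + 2*(b.re*c.re + b.im*c.im) := by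
    rw [htr]
    simp [Complex.add_re, Complex.mul_re, Complex.conj_re, Complex.conj_im]
    ring
  have hid : 4*(b.re*c.re+b.im*c.im)^2 + ((a.re^2+a.im^2 - d.re^2 - d.im^2)^2
      + 4*(a.re+d.re)^2 + 4*(a.im-d.im)^2 + 4*(b.im*c.re - b.re*c.im)^2)
      = (a.re^2+a.im^2+d.re^2+d.im^2+2)^2 := by
    linear_combination 4*(b.re*c.re - b.im*c.im + a.re*d.re - a.im*d.im - 1)*e1
      + 4*(b.re*c.im + b.im*c.re + a.re*d.im + a.im*d.re)*e2
  have hK : (0:ℝ) < a.re^2+a.im^2+d.re^2+d.im^2+2 := by positivity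
  have hgeq : -2 ≤ (!![a, b; c, d] * !![(starRingEnd ℂ) a, (starRingEnd ℂ) b;
      (starRingEnd ℂ) c, (starRingEnd ℂ) d]).trace.re := by
    rw [hre_expr]
    nlinarith [hid, hK, sq_nonneg (a.re^2+a.im^2+d.re^2+d.im^2+2 + 2*(b.re*c.re+b.im*c.im)),
      sq_nonneg (a.re^2+a.im^2-d.re^2-d.im^2), sq_nonneg (a.re+d.re), sq_nonneg (a.im-d.im),
      sq_nonneg (b.im*c.re - b.re*c.im)]
  by_cases hlt : -2 < (!![a, b; c, d] * !![(starRingEnd ℂ) a, (starRingEnd ℂ) b;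
      (starRingEnd ℂ) c, (starRingEnd ℂ) d]).trace.re
  · exact Or.inl ⟨him, hlt⟩
  right
  have heq : (!![a, b; c, d] * !![(starRingEnd ℂ) a, (starRingEnd ℂ) b;
      (starRingEnd ℂ) c, (starRingEnd ℂ) d]).trace.re = -2 :=
    le_antisymm (not_lt.1 hlt) hgeq
  rw [hre_expr] at heq
  have e3 : 2*(b.re*c.re+b.im*c.im) = -(a.re^2+a.im^2+d.re^2+d.im^2) - 2 := by linarith
  have hsum : (b.im*c.re - b.re*c.im)^2 + (a.re+d.re)^2 + (a.im-d.im)^2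
      + ((a.re^2+a.im^2-d.re^2-d.im^2)/2)^2 = 0 := by
    linear_combination (b.re*c.re - b.im*c.im + a.re*d.re - a.im*d.im - 1)*e1
      + (b.re*c.im + b.im*c.re + a.re*d.im + a.im*d.re)*e2
      - ((2*(b.re*c.re+b.im*c.im) - (a.re^2+a.im^2+d.re^2+d.im^2) - 2)/4)*e3
  have sqz : ∀ x : ℝ, x^2 ≤ 0 → x = 0 := fun x h =>
    pow_eq_zero_iff two_ne_zero |>.mp (le_antisymm h (sq_nonneg x))
  have hY : b.im*c.re - b.re*c.im = 0 := by
    have h0 : (b.im*c.re - b.re*c.im)^2 ≤ 0 := by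
      linarith [hsum, sq_nonneg (a.re+d.re), sq_nonneg (a.im-d.im),
        sq_nonneg ((a.re^2+a.im^2-d.re^2-d.im^2)/2)]
    exact sqz _ h0
  have hP1 : a.re + d.re = 0 := by
    apply sqz
    linarith [hsum, sq_nonneg (b.im*c.re - b.re*c.im), sq_nonneg (a.im-d.im),
      sq_nonneg ((a.re^2+a.im^2-d.re^2-d.im^2)/2)]
  have hP2 : a.im - d.im = 0 := by
    apply sqz
    linarith [hsum, sq_nonneg (b.im*c.re - b.re*c.im), sq_nonneg (a.re+d.re),
      sq_nonneg ((a.re^2+a.im^2-d.re^2-d.im^2)/2)]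
  have hAD : a.re^2+a.im^2 - d.re^2 - d.im^2 = 0 := by
    have h0 : (a.re^2+a.im^2-d.re^2-d.im^2)/2 = 0 := by
      apply sqz
      linarith [hsum, sq_nonneg (b.im*c.re - b.re*c.im), sq_nonneg (a.re+d.re),
        sq_nonneg (a.im-d.im)]
    linarith
  have hbc1 : b.re*c.re - b.im*c.im = -(a.re^2+a.im^2) - 1 := by
    linear_combination e1 + a.re*hP1 + a.im*hP2
  have hbc2 : b.re*c.im + b.im*c.re = 0 := by
    linear_combination e2 + a.im*hP1 - a.re*hP2
  have hbc3 : b.re*c.re + b.im*c.im = -(a.re^2+a.im^2) - 1 := by linarith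
  have hb2c2 : b.im*c.im = 0 := by linarith
  have hb1c1 : b.re*c.re = -(a.re^2+a.im^2) - 1 := by linarith
  have hb2c1 : b.im*c.re = 0 := by linarith
  have hb1c2 : b.re*c.im = 0 := by linarith
  have hbre : b.re ≠ 0 := by
    intro h
    have h0 : (0:ℝ) = -(a.re^2+a.im^2) - 1 := by linear_combination hb1c1 - c.re*h
    linarith [sq_nonneg a.re, sq_nonneg a.im]
  have hcre : c.re ≠ 0 := by
    intro h
    have h0 : (0:ℝ) = -(a.re^2+a.im^2) - 1 := by linear_combination hb1c1 - b.re*h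
    linarith [sq_nonneg a.re, sq_nonneg a.im]
  have hbim : b.im = 0 := (mul_eq_zero.1 hb2c1).resolve_right hcre
  have hcim : c.im = 0 := (mul_eq_zero.1 hb1c2).resolve_left hbre
  rw [Matrix.mul_fin_two]
  ext i j
  fin_cases i <;> fin_cases j <;>
    simp only [Matrix.cons_val', Matrix.cons_val_zero, Matrix.cons_val_one, Matrix.head_cons,
      Matrix.head_fin_const, Matrix.empty_val', Matrix.cons_val_fin_one, Matrix.neg_apply,
      Matrix.one_apply, Fin.zero_eta, Fin.mk_one, Matrix.of_apply, ne_eq, zero_ne_one,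
      one_ne_zero, if_true, if_false, ite_true, ite_false, neg_zero]
  · apply Complex.ext <;>
      simp only [Complex.add_re, Complex.add_im, Complex.mul_re, Complex.mul_im,
        Complex.conj_re, Complex.conj_im, Complex.neg_re, Complex.neg_im,
        Complex.one_re, Complex.one_im, neg_zero]
    · linear_combination hb1c1 + hb2c2
    · linear_combination hY
  · apply Complex.ext <;>
      simp only [Complex.add_re, Complex.add_im, Complex.mul_re, Complex.mul_im,
        Complex.conj_re, Complex.conj_im, Complex.zero_re, Complex.zero_im]
    · linear_combination b.re*hP1 + (a.im + d.im)*hbim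
    · linear_combination b.re*hP2 + (d.re - a.re)*hbim
  · apply Complex.ext <;>
      simp only [Complex.add_re, Complex.add_im, Complex.mul_re, Complex.mul_im,
        Complex.conj_re, Complex.conj_im, Complex.zero_re, Complex.zero_im]
    · linear_combination c.re*hP1 + (a.im + d.im)*hcim
    · linear_combination -c.re*hP2 + (a.re - d.re)*hcim
  · apply Complex.ext <;>
      simp only [Complex.add_re, Complex.add_im, Complex.mul_re, Complex.mul_im,
        Complex.conj_re, Complex.conj_im, Complex.neg_re, Complex.neg_im,
        Complex.one_re, Complex.one_im, neg_zero]
    · linear_combination hb1c1 + hb2c2 - hAD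
    · linear_combination -hY

private lemma bwd (B : Matrix (Fin 2) (Fin 2) ℂ) (hB : B.det = 1)
    (him : B.trace.im = 0) (hre : -2 < B.trace.re) :
    ∃ A : Matrix (Fin 2) (Fin 2) ℂ, A.det = 1 ∧ A * A.map (starRingEnd ℂ) = B := by
  by_cases hb : B 0 1 ≠ 0
  · exact key B hB him hre hb
  push_neg at hb
  have hBe : B = !![B 0 0, B 0 1; B 1 0, B 1 1] := B.eta_fin_two
  set a := B 0 0; set b := B 0 1; set c := B 1 0; set d := B 1 1
  rw [hBe, Matrix.det_fin_two_of] at hB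
  rw [hBe, Matrix.trace_fin_two_of] at him hre
  by_cases hc : c ≠ 0
  · -- swap case
    have hdet' : (!![d, c; b, a]).det = 1 := by
      rw [Matrix.det_fin_two_of]; linear_combination hB
    have htr' : (!![d, c; b, a]).trace = a + d := by
      rw [Matrix.trace_fin_two_of]; ring
    obtain ⟨A', h1', h2'⟩ := key !![d, c; b, a] hdet'
      (by rw [htr']; exact him) (by rw [htr']; exact hre) (by simpa using hc)
    set J : Matrix (Fin 2) (Fin 2) ℂ := !![0, 1; 1, 0] with hJdef
    have hJJ : J * J = 1 := by
      rw [hJdef]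
      ext i j
      fin_cases i <;> fin_cases j <;>
        simp [Matrix.mul_apply, Fin.sum_univ_two, Matrix.one_apply]
    have hJmap : J.map (starRingEnd ℂ) = J := by
      rw [hJdef, map_fin_two]; simp
    refine ⟨J * A' * J, ?_, ?_⟩
    · rw [Matrix.det_mul, Matrix.det_mul, h1', hJdef, Matrix.det_fin_two_of]
      norm_num
    · rw [Matrix.map_mul, Matrix.map_mul, hJmap]
      calc J * A' * J * (J * A'.map (starRingEnd ℂ) * J)
          = J * (A' * (J * J) * A'.map (starRingEnd ℂ)) * J := by
            simp only [Matrix.mul_assoc]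
        _ = J * (A' * A'.map (starRingEnd ℂ)) * J := by rw [hJJ, Matrix.mul_one]
        _ = J * !![d, c; b, a] * J := by rw [h2']
        _ = B := by
            rw [hBe, hJdef]
            ext i j
            fin_cases i <;> fin_cases j <;>
              simp [Matrix.mul_apply, Fin.sum_univ_two]
  · -- diagonal case
    push_neg at hc
    rw [hb, hc] at hBe
    rw [hb, hc] at hB
    simp only [mul_zero, zero_mul, sub_zero] at hB
    by_cases had : a = d
    · -- scalar
      have ha2 : (a - 1) * (a + 1) = 0 := by rw [had] at hB ⊢; linear_combination hB
      rcases mul_eq_zero.1 ha2 with h | h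
      · have ha1 : a = 1 := by linear_combination h
        refine ⟨(1 : Matrix (Fin 2) (Fin 2) ℂ), Matrix.det_one, ?_⟩
        rw [show (1 : Matrix (Fin 2) (Fin 2) ℂ).map (starRingEnd ℂ) = 1 from
          Matrix.map_one _ (RingHom.map_zero _) (RingHom.map_one _),
          Matrix.mul_one, hBe, ha1, ← had, ha1]
        ext i j
        fin_cases i <;> fin_cases j <;> simp [Matrix.one_apply]
      · exfalso
        have ha1 : a = -1 := by linear_combination h
        rw [ha1, ← had, ha1] at hre
        norm_num at hre
    · -- distinct diagonal
      have hdet' : (!![(a+d)/2, (d-a)/2; (d-a)/2, (a+d)/2]).det = 1 := by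
        rw [Matrix.det_fin_two_of]; linear_combination hB
      have htr' : (!![(a+d)/2, (d-a)/2; (d-a)/2, (a+d)/2]).trace = a + d := by
        rw [Matrix.trace_fin_two_of]; ring
      obtain ⟨A', h1', h2'⟩ := key _ hdet'
        (by rw [htr']; exact him) (by rw [htr']; exact hre)
        (by simp; intro h; exact had (by linear_combination -h))
      set R : Matrix (Fin 2) (Fin 2) ℂ := !![1, 1; -1, 1] with hRdef
      set Ri : Matrix (Fin 2) (Fin 2) ℂ := !![1/2, -(1/2); 1/2, 1/2] with hRidef
      have hRiR : R * Ri = 1 := by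
        rw [hRdef, hRidef]
        ext i j
        fin_cases i <;> fin_cases j <;>
          simp [Matrix.mul_apply, Fin.sum_univ_two, Matrix.one_apply] <;> norm_num
      have hRmap : R.map (starRingEnd ℂ) = R := by rw [hRdef, map_fin_two]; simp
      have hRimap : Ri.map (starRingEnd ℂ) = Ri := by
        rw [hRidef, map_fin_two]
        norm_num [map_inv₀, map_ofNat]
      refine ⟨Ri * A' * R, ?_, ?_⟩
      · rw [Matrix.det_mul, Matrix.det_mul, h1', hRdef, hRidef,
          Matrix.det_fin_two_of, Matrix.det_fin_two_of]
        norm_num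
      · rw [Matrix.map_mul, Matrix.map_mul, hRmap, hRimap]
        calc Ri * A' * R * (Ri * A'.map (starRingEnd ℂ) * R)
            = Ri * (A' * (R * Ri) * A'.map (starRingEnd ℂ)) * R := by
              simp only [Matrix.mul_assoc]
          _ = Ri * (A' * A'.map (starRingEnd ℂ)) * R := by rw [hRiR, Matrix.mul_one]
          _ = Ri * !![(a+d)/2, (d-a)/2; (d-a)/2, (a+d)/2] * R := by rw [h2']
          _ = B := by
              rw [hBe, hRdef, hRidef]
              ext i j
              fin_cases i <;> fin_cases j <;>
                simp [Matrix.mul_apply, Fin.sum_univ_two] <;> ring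

theorem image_square_map (B : Matrix (Fin 2) (Fin 2) ℂ) (hB : B.det = 1) :
    (∃ A : Matrix (Fin 2) (Fin 2) ℂ, A.det = 1 ∧ A * A.map (starRingEnd ℂ) = B) ↔
      ((B.trace.im = 0 ∧ -2 < B.trace.re) ∨ B = -1) := by
  constructor
  · rintro ⟨A, hA1, rfl⟩
    exact fwd A hA1
  · rintro (⟨him, hre⟩ | rfl)
    · exact bwd B hB him hre
    · refine ⟨!![0, 1; -1, 0], by rw [Matrix.det_fin_two_of]; norm_num, ?_⟩
      rw [map_fin_two]
      ext i j
      fin_cases i <;> fin_cases j <;>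
        simp [Matrix.mul_apply, Fin.sum_univ_two, Matrix.neg_apply, Matrix.one_apply]
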